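/- arXiv:2301.08308 — 7 statements merged into one kernel-verified Lean document; each statement's English description precedes it below -/
import Mathlib

section
/- Let K(x,t) = k(x)h(t) be a separable kernel with k continuous and k(x) ≠ 0 for all x, h continuous, and let τ(x) = k(x)/k(0). Then the operator P(f)(x) = ∫₀ˣ K(x,t)f(t) dt is a twisted Rota-Baxter operator with twist τ: for all continuous f, g, P(f)·P(g) = τ·P(τ⁻¹·f·P(g)) + τ·P(τ⁻¹·P(f)·g). -/
open intervalIntegral

lemma prod_primitive (φ ψ : ℝ → ℝ) (hφ : Continuous φ) (hψ : Continuous ψ) (x : ℝ) :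
    (∫ t in (0:ℝ)..x, φ t) * (∫ t in (0:ℝ)..x, ψ t) =
      ∫ t in (0:ℝ)..x, (φ t * ∫ s in (0:ℝ)..t, ψ s) + (∫ s in (0:ℝ)..t, φ s) * ψ t := by
  set F : ℝ → ℝ := fun t => ∫ s in (0:ℝ)..t, φ s with hF
  set G : ℝ → ℝ := fun t => ∫ s in (0:ℝ)..t, ψ s with hG
  have hFc : Continuous F := intervalIntegral.continuous_primitive (fun a b => hφ.intervalIntegrable a b) 0
  have hGc : Continuous G := intervalIntegral.continuous_primitive (fun a b => hψ.intervalIntegrable a b) 0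
  have hder : ∀ t ∈ Set.uIcc (0:ℝ) x, HasDerivAt (fun u => F u * G u)
      (φ t * G t + F t * ψ t) t := by
    intro t _
    have h1 : HasDerivAt F (φ t) t :=
      intervalIntegral.integral_hasDerivAt_right (hφ.intervalIntegrable _ _)
        (hφ.stronglyMeasurableAtFilter _ _) hφ.continuousAt
    have h2 : HasDerivAt G (ψ t) t :=
      intervalIntegral.integral_hasDerivAt_right (hψ.intervalIntegrable _ _)
        (hψ.stronglyMeasurableAtFilter _ _) hψ.continuousAt
    exact h1.mul h2
  have hint : IntervalIntegrable (fun t => φ t * G t + F t * ψ t) MeasureTheory.volume 0 x :=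
    (((hφ.mul hGc).add (hFc.mul hψ))).intervalIntegrable _ _
  have := intervalIntegral.integral_eq_sub_of_hasDerivAt hder hint
  simpa [F, G] using this.symm

/-- The separable Volterra operator with kernel `K(x,t) = k(x)h(t)`. -/
noncomputable def volterraP (k h f : ℝ → ℝ) (x : ℝ) : ℝ :=
  ∫ t in (0:ℝ)..x, k x * h t * f t

/-- A separable Volterra integral operator is a twisted Rota-Baxter operator
with twist `τ(x) = k(x)/k(0)`. -/
theorem separable_volterra_twisted_rota_baxter
    (k h : ℝ → ℝ) (hk : Continuous k) (hh : Continuous h)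
    (hk0 : ∀ x, k x ≠ 0)
    (f g : ℝ → ℝ) (hf : Continuous f) (hg : Continuous g) :
    let τ : ℝ → ℝ := fun x => k x / k 0
    ∀ x : ℝ,
      volterraP k h f x * volterraP k h g x =
        τ x * volterraP k h (fun t => (τ t)⁻¹ * f t * volterraP k h g t) x +
        τ x * volterraP k h (fun t => (τ t)⁻¹ * volterraP k h f t * g t) x := by
  intro τ x
  have hP : ∀ (φ : ℝ → ℝ) (y : ℝ),
      volterraP k h φ y = k y * ∫ t in (0:ℝ)..y, h t * φ t := by
    intro φ y
    simp [volterraP, mul_assoc, intervalIntegral.integral_const_mul]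
  set F : ℝ → ℝ := fun t => ∫ s in (0:ℝ)..t, h s * f s with hFdef
  set G : ℝ → ℝ := fun t => ∫ s in (0:ℝ)..t, h s * g s with hGdef
  have hFc : Continuous F :=
    intervalIntegral.continuous_primitive (fun a b => (hh.mul hf).intervalIntegrable a b) 0
  have hGc : Continuous G :=
    intervalIntegral.continuous_primitive (fun a b => (hh.mul hg).intervalIntegrable a b) 0
  have c1 : (∫ t in (0:ℝ)..x, h t * ((τ t)⁻¹ * f t * (k t * G t)))
      = k 0 * ∫ t in (0:ℝ)..x, h t * f t * G t := by
    rw [← intervalIntegral.integral_const_mul]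
    apply intervalIntegral.integral_congr
    intro t _
    simp only [τ]
    field_simp [hk0 t, hk0 0]
  have c2 : (∫ t in (0:ℝ)..x, h t * ((τ t)⁻¹ * (k t * F t) * g t))
      = k 0 * ∫ t in (0:ℝ)..x, F t * (h t * g t) := by
    rw [← intervalIntegral.integral_const_mul]
    apply intervalIntegral.integral_congr
    intro t _
    simp only [τ]
    field_simp [hk0 t, hk0 0]
  have key := prod_primitive (fun t => h t * f t) (fun t => h t * g t)
    (hh.mul hf) (hh.mul hg) x
  have hadd : (∫ t in (0:ℝ)..x, ((h t * f t) * G t + F t * (h t * g t)))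
      = (∫ t in (0:ℝ)..x, h t * f t * G t) + ∫ t in (0:ℝ)..x, F t * (h t * g t) :=
    intervalIntegral.integral_add
      (((hh.mul hf).mul hGc).intervalIntegrable _ _)
      ((hFc.mul (hh.mul hg)).intervalIntegrable _ _)
  simp only [hP]
  rw [c1, c2]
  simp only [τ]
  rw [show (∫ t in (0:ℝ)..x, h t * f t) = F x from rfl,
      show (∫ t in (0:ℝ)..x, h t * g t) = G x from rfl]
  have keyFG : F x * G x
      = (∫ t in (0:ℝ)..x, h t * f t * G t) + ∫ t in (0:ℝ)..x, F t * (h t * g t) := by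
    rw [← hadd]; exact key
  field_simp [hk0 0]
  linear_combination (norm := ring_nf) (k x * k x) * keyFG
end

section
/- Let α and β index two separable kernels K_α(x,t) = k_α(x)h_α(t) and K_β(x,t) = k_β(x)h_β(t) with k_α, k_β nonvanishing continuous functions, and set τ_ω(x) = k_ω(x)/k_ω(0), P_ω(f)(x) = ∫₀ˣ K_ω(x,t)f(t) dt. Then for all continuous f, g: P_α(f)·P_β(g) = τ_α·P_β(τ_α⁻¹·P_α(f)·g) + τ_β·P_α(τ_β⁻¹·f·P_β(g)). -/
/-- The matching twisted Rota-Baxter identity for a pair of separable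
Volterra integral operators `P_α`, `P_β` with twists `τ_ω(x) = k_ω(x)/k_ω(0)`. -/
theorem matching_twisted_rota_baxter
    (kα hα kβ hβ : ℝ → ℝ)
    (hkα : Continuous kα) (hhα : Continuous hα)
    (hkβ : Continuous kβ) (hhβ : Continuous hβ)
    (hkα0 : ∀ x, kα x ≠ 0) (hkβ0 : ∀ x, kβ x ≠ 0)
    (f g : ℝ → ℝ) (hf : Continuous f) (hg : Continuous g) :
    let τα : ℝ → ℝ := fun x => kα x / kα 0
    let τβ : ℝ → ℝ := fun x => kβ x / kβ 0
    ∀ x : ℝ,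
      volterraP kα hα f x * volterraP kβ hβ g x =
        τα x * volterraP kβ hβ (fun t => (τα t)⁻¹ * volterraP kα hα f t * g t) x +
        τβ x * volterraP kα hα (fun t => (τβ t)⁻¹ * f t * volterraP kβ hβ g t) x := by
  intro τα τβ x
  set F : ℝ → ℝ := fun y => ∫ t in (0:ℝ)..y, hα t * f t with hFdef
  set G : ℝ → ℝ := fun y => ∫ t in (0:ℝ)..y, hβ t * g t with hGdef
  have hFderiv : ∀ t : ℝ, HasDerivAt F (hα t * f t) t := fun t =>
    ((hhα.mul hf).integral_hasStrictDerivAt 0 t).hasDerivAt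
  have hGderiv : ∀ t : ℝ, HasDerivAt G (hβ t * g t) t := fun t =>
    ((hhβ.mul hg).integral_hasStrictDerivAt 0 t).hasDerivAt
  have hFc : Continuous F :=
    continuous_iff_continuousAt.mpr fun t => (hFderiv t).continuousAt
  have hGc : Continuous G :=
    continuous_iff_continuousAt.mpr fun t => (hGderiv t).continuousAt
  have key : F x * G x =
      (∫ t in (0:ℝ)..x, hα t * f t * G t) + ∫ t in (0:ℝ)..x, F t * (hβ t * g t) := by
    have := intervalIntegral.integral_deriv_mul_eq_sub (a := 0) (b := x)
      (fun t _ => hFderiv t) (fun t _ => hGderiv t)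
      ((hhα.mul hf).intervalIntegrable 0 x) ((hhβ.mul hg).intervalIntegrable 0 x)
    rw [intervalIntegral.integral_add (f := fun t => hα t * f t * G t) (g := fun t => F t * (hβ t * g t))
      (((hhα.mul hf).mul hGc).intervalIntegrable 0 x)
      ((hFc.mul (hhβ.mul hg)).intervalIntegrable 0 x)] at this
    simp only [hFdef, hGdef, intervalIntegral.integral_same] at this ⊢
    linarith
  have PA : ∀ y, volterraP kα hα f y = kα y * F y := fun y => by
    simp only [volterraP, hFdef, mul_assoc, intervalIntegral.integral_const_mul]
  have PB : ∀ y, volterraP kβ hβ g y = kβ y * G y := fun y => by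
    simp only [volterraP, hGdef, mul_assoc, intervalIntegral.integral_const_mul]
  have T1 : volterraP kβ hβ (fun t => (τα t)⁻¹ * volterraP kα hα f t * g t) x
      = kβ x * kα 0 * ∫ t in (0:ℝ)..x, F t * (hβ t * g t) := by
    rw [show (fun t => (τα t)⁻¹ * volterraP kα hα f t * g t) = fun t => kα 0 * (F t * g t) from
      funext fun t => by rw [PA t]; simp only [τα]; field_simp [hkα0 t]]
    unfold volterraP
    rw [← intervalIntegral.integral_const_mul]
    exact intervalIntegral.integral_congr fun t _ => by ring
  have T2 : volterraP kα hα (fun t => (τβ t)⁻¹ * f t * volterraP kβ hβ g t) x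
      = kα x * kβ 0 * ∫ t in (0:ℝ)..x, hα t * f t * G t := by
    rw [show (fun t => (τβ t)⁻¹ * f t * volterraP kβ hβ g t) = fun t => kβ 0 * (f t * G t) from
      funext fun t => by rw [PB t]; simp only [τβ]; field_simp [hkβ0 t]]
    unfold volterraP
    rw [← intervalIntegral.integral_const_mul]
    exact intervalIntegral.integral_congr fun t _ => by ring
  rw [PA x, PB x, T1, T2]
  simp only [τα, τβ]
  have i1 : kα 0 * (kα 0)⁻¹ = 1 := mul_inv_cancel₀ (hkα0 0)
  have i2 : kβ 0 * (kβ 0)⁻¹ = 1 := mul_inv_cancel₀ (hkβ0 0)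
  linear_combination (kα x * kβ x) * key -
    (kα x * kβ x * ∫ t in (0:ℝ)..x, F t * (hβ t * g t)) * i1 -
    (kα x * kβ x * ∫ t in (0:ℝ)..x, hα t * f t * G t) * i2
end

section
/- (Product of a single integral with a double iterated integral.) Let P_α, P_β₁, P_β₂ be separable Volterra operators with kernels K_ω(x,t) = k_ω(x)h_ω(t), k_ω nonvanishing, and twists τ_ω(x) = k_ω(x)/k_ω(0). Then for continuous a, f, g₁, g₂: a·P_α(f)·P_{β₁}(g₁·P_{β₂}(g₂)) = τ_{β₁}·a·P_α(τ_{β₁}⁻¹·f·P_{β₁}(g₁·P_{β₂}(g₂))) + τ_α·a·P_{β₁}(τ_α⁻¹·g₁·τ_{β₂}·P_α(τ_{β₂}⁻¹·f·P_{β₂}(g₂))) + τ_α·a·P_{β₁}(g₁·P_{β₂}(τ_α⁻¹·g₂·P_α(f))). -/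
open intervalIntegral

private lemma prim_cont (u : ℝ → ℝ) (hu : Continuous u) :
    Continuous (fun t => ∫ s in (0:ℝ)..t, u s) := by
  have h : ∀ t : ℝ, HasDerivAt (fun t => ∫ s in (0:ℝ)..t, u s) (u t) t := fun t =>
    (hu.integral_hasStrictDerivAt 0 t).hasDerivAt
  exact continuous_iff_continuousAt.2 fun t => (h t).continuousAt

private lemma prod_prim (u v : ℝ → ℝ) (hu : Continuous u) (hv : Continuous v) (x : ℝ) :
    ∫ t in (0:ℝ)..x, (u t * ∫ s in (0:ℝ)..t, v s) + (v t * ∫ s in (0:ℝ)..t, u s) =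
      (∫ t in (0:ℝ)..x, u t) * ∫ t in (0:ℝ)..x, v t := by
  set F : ℝ → ℝ := fun t => ∫ s in (0:ℝ)..t, u s with hF
  set G : ℝ → ℝ := fun t => ∫ s in (0:ℝ)..t, v s with hG
  have hFc : Continuous F := prim_cont u hu
  have hGc : Continuous G := prim_cont v hv
  have hderiv : ∀ t ∈ Set.uIcc (0:ℝ) x, HasDerivAt (fun t => F t * G t)
      (u t * G t + v t * F t) t := by
    intro t _
    have h1 : HasDerivAt F (u t) t := (hu.integral_hasStrictDerivAt 0 t).hasDerivAt
    have h2 : HasDerivAt G (v t) t := (hv.integral_hasStrictDerivAt 0 t).hasDerivAt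
    rw [show u t * G t + v t * F t = u t * G t + F t * v t by ring]
    exact h1.mul h2
  have := integral_eq_sub_of_hasDerivAt hderiv
    (((hu.mul hGc).add (hv.mul hFc)).intervalIntegrable 0 x)
  simpa [F, G, integral_same] using this

private lemma volterraP_eq (k h f : ℝ → ℝ) (x : ℝ) :
    volterraP k h f x = k x * ∫ t in (0:ℝ)..x, h t * f t := by
  simp [volterraP, mul_assoc, intervalIntegral.integral_const_mul]

/-- Operator-linear reduction of the product of a single integral with a
double iterated integral:
`a·P_α(f)·P_{β₁}(g₁·P_{β₂}(g₂))` equals a sum of three iterated integrals. -/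
theorem reduction_single_times_double
    (kα hα kβ₁ hβ₁ kβ₂ hβ₂ : ℝ → ℝ)
    (hkα : Continuous kα) (hhα : Continuous hα)
    (hkβ₁ : Continuous kβ₁) (hhβ₁ : Continuous hβ₁)
    (hkβ₂ : Continuous kβ₂) (hhβ₂ : Continuous hβ₂)
    (hkα0 : ∀ x, kα x ≠ 0) (hkβ₁0 : ∀ x, kβ₁ x ≠ 0) (hkβ₂0 : ∀ x, kβ₂ x ≠ 0)
    (a f g₁ g₂ : ℝ → ℝ)
    (ha : Continuous a) (hf : Continuous f) (hg₁ : Continuous g₁) (hg₂ : Continuous g₂) :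
    let τα : ℝ → ℝ := fun x => kα x / kα 0
    let τβ₁ : ℝ → ℝ := fun x => kβ₁ x / kβ₁ 0
    let τβ₂ : ℝ → ℝ := fun x => kβ₂ x / kβ₂ 0
    ∀ x : ℝ,
      a x * volterraP kα hα f x *
          volterraP kβ₁ hβ₁ (fun t => g₁ t * volterraP kβ₂ hβ₂ g₂ t) x =
        τβ₁ x * a x * volterraP kα hα
            (fun t => (τβ₁ t)⁻¹ * f t *
              volterraP kβ₁ hβ₁ (fun u => g₁ u * volterraP kβ₂ hβ₂ g₂ u) t) x +
        τα x * a x * volterraP kβ₁ hβ₁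
            (fun t => (τα t)⁻¹ * g₁ t * τβ₂ t *
              volterraP kα hα
                (fun u => (τβ₂ u)⁻¹ * f u * volterraP kβ₂ hβ₂ g₂ u) t) x +
        τα x * a x * volterraP kβ₁ hβ₁
            (fun t => g₁ t *
              volterraP kβ₂ hβ₂
                (fun u => (τα u)⁻¹ * g₂ u * volterraP kα hα f u) t) x := by
  intro τα τβ₁ τβ₂ x
  -- primitives
  set A : ℝ → ℝ := fun t => ∫ s in (0:ℝ)..t, hα s * f s with hA_def
  set C : ℝ → ℝ := fun t => ∫ s in (0:ℝ)..t, hβ₂ s * g₂ s with hC_def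
  have hAc : Continuous A := prim_cont _ (hhα.mul hf)
  have hCc : Continuous C := prim_cont _ (hhβ₂.mul hg₂)
  set B : ℝ → ℝ := fun t => ∫ s in (0:ℝ)..t, hβ₁ s * (g₁ s * (kβ₂ s * C s)) with hB_def
  have hBc : Continuous B := prim_cont _ (hhβ₁.mul (hg₁.mul (hkβ₂.mul hCc)))
  set D : ℝ → ℝ := fun t => ∫ s in (0:ℝ)..t, hα s * (f s * C s) with hD_def
  set E : ℝ → ℝ := fun t => ∫ s in (0:ℝ)..t, hβ₂ s * (g₂ s * A s) with hE_def
  -- base rewrites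
  have hP2 : ∀ t, volterraP kβ₂ hβ₂ g₂ t = kβ₂ t * C t := fun t => volterraP_eq _ _ _ t
  have hPα : ∀ t, volterraP kα hα f t = kα t * A t := fun t => volterraP_eq _ _ _ t
  have hPB : ∀ t, volterraP kβ₁ hβ₁ (fun u => g₁ u * volterraP kβ₂ hβ₂ g₂ u) t
      = kβ₁ t * B t := by
    intro t
    rw [volterraP_eq]
    congr 1
    exact intervalIntegral.integral_congr fun s _ => by rw [hP2]
  -- Term 1
  have hT1 : volterraP kα hα
      (fun t => (τβ₁ t)⁻¹ * f t *
        volterraP kβ₁ hβ₁ (fun u => g₁ u * volterraP kβ₂ hβ₂ g₂ u) t) x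
      = kα x * (kβ₁ 0 * ∫ t in (0:ℝ)..x, hα t * (f t * B t)) := by
    rw [volterraP_eq]
    rw [show (∫ t in (0:ℝ)..x, hα t * ((τβ₁ t)⁻¹ * f t *
        volterraP kβ₁ hβ₁ (fun u => g₁ u * volterraP kβ₂ hβ₂ g₂ u) t))
        = ∫ t in (0:ℝ)..x, kβ₁ 0 * (hα t * (f t * B t)) from
      intervalIntegral.integral_congr fun t _ => by
        rw [hPB t]
        simp only [τβ₁]
        field_simp [hkβ₁0 t]]
    rw [intervalIntegral.integral_const_mul]
  -- Term 2 inner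
  have hT2i : ∀ t, volterraP kα hα
      (fun u => (τβ₂ u)⁻¹ * f u * volterraP kβ₂ hβ₂ g₂ u) t
      = kα t * (kβ₂ 0 * D t) := by
    intro t
    rw [volterraP_eq]
    congr 1
    rw [show (∫ u in (0:ℝ)..t, hα u * ((τβ₂ u)⁻¹ * f u * volterraP kβ₂ hβ₂ g₂ u))
        = ∫ u in (0:ℝ)..t, kβ₂ 0 * (hα u * (f u * C u)) from
      intervalIntegral.integral_congr fun u _ => by
        rw [hP2 u]
        simp only [τβ₂]
        field_simp [hkβ₂0 u]]
    rw [intervalIntegral.integral_const_mul]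
  -- Term 2
  have hT2 : volterraP kβ₁ hβ₁
      (fun t => (τα t)⁻¹ * g₁ t * τβ₂ t *
        volterraP kα hα (fun u => (τβ₂ u)⁻¹ * f u * volterraP kβ₂ hβ₂ g₂ u) t) x
      = kβ₁ x * (kα 0 * ∫ t in (0:ℝ)..x, hβ₁ t * (g₁ t * (kβ₂ t * D t))) := by
    rw [volterraP_eq]
    congr 1
    rw [show (∫ t in (0:ℝ)..x, hβ₁ t * ((τα t)⁻¹ * g₁ t * τβ₂ t *
        volterraP kα hα (fun u => (τβ₂ u)⁻¹ * f u * volterraP kβ₂ hβ₂ g₂ u) t))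
        = ∫ t in (0:ℝ)..x, kα 0 * (hβ₁ t * (g₁ t * (kβ₂ t * D t))) from
      intervalIntegral.integral_congr fun t _ => by
        rw [hT2i t]
        simp only [τα, τβ₂]
        field_simp [hkα0 t, hkβ₂0 0]]
    rw [intervalIntegral.integral_const_mul]
  -- Term 3 inner
  have hT3i : ∀ t, volterraP kβ₂ hβ₂
      (fun u => (τα u)⁻¹ * g₂ u * volterraP kα hα f u) t
      = kβ₂ t * (kα 0 * E t) := by
    intro t
    rw [volterraP_eq]
    congr 1
    rw [show (∫ u in (0:ℝ)..t, hβ₂ u * ((τα u)⁻¹ * g₂ u * volterraP kα hα f u))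
        = ∫ u in (0:ℝ)..t, kα 0 * (hβ₂ u * (g₂ u * A u)) from
      intervalIntegral.integral_congr fun u _ => by
        rw [hPα u]
        simp only [τα]
        field_simp [hkα0 u]]
    rw [intervalIntegral.integral_const_mul]
  -- Term 3
  have hT3 : volterraP kβ₁ hβ₁
      (fun t => g₁ t *
        volterraP kβ₂ hβ₂ (fun u => (τα u)⁻¹ * g₂ u * volterraP kα hα f u) t) x
      = kβ₁ x * (kα 0 * ∫ t in (0:ℝ)..x, hβ₁ t * (g₁ t * (kβ₂ t * E t))) := by
    rw [volterraP_eq]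
    congr 1
    rw [show (∫ t in (0:ℝ)..x, hβ₁ t * (g₁ t *
        volterraP kβ₂ hβ₂ (fun u => (τα u)⁻¹ * g₂ u * volterraP kα hα f u) t))
        = ∫ t in (0:ℝ)..x, kα 0 * (hβ₁ t * (g₁ t * (kβ₂ t * E t))) from
      intervalIntegral.integral_congr fun t _ => by rw [hT3i t]; ring]
    rw [intervalIntegral.integral_const_mul]
  -- the key identity
  have hDE : ∀ t, D t + E t = A t * C t := by
    intro t
    have := prod_prim (fun s => hα s * f s) (fun s => hβ₂ s * g₂ s)
      (hhα.mul hf) (hhβ₂.mul hg₂) t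
    rw [← this, ← intervalIntegral.integral_add
      (((hhα.mul hf).mul hCc).intervalIntegrable 0 t |>.congr ?_)
      (((hhβ₂.mul hg₂).mul hAc).intervalIntegrable 0 t |>.congr ?_)]
    · exact intervalIntegral.integral_congr fun s _ => by ring
    · exact (fun s _ => by simp [mul_assoc])
    · exact (fun s _ => by simp [mul_assoc])
  have hIntD : Continuous D := prim_cont _ ((hhα.mul hf).mul hCc |>.congr
      (fun s => by simp [mul_assoc]))
  have hIntE : Continuous E := prim_cont _ ((hhβ₂.mul hg₂).mul hAc |>.congr
      (fun s => by simp [mul_assoc]))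
  have hkey : (∫ t in (0:ℝ)..x, hα t * (f t * B t))
      + ((∫ t in (0:ℝ)..x, hβ₁ t * (g₁ t * (kβ₂ t * D t)))
        + (∫ t in (0:ℝ)..x, hβ₁ t * (g₁ t * (kβ₂ t * E t))))
      = A x * B x := by
    have h23 : (∫ t in (0:ℝ)..x, hβ₁ t * (g₁ t * (kβ₂ t * D t)))
        + (∫ t in (0:ℝ)..x, hβ₁ t * (g₁ t * (kβ₂ t * E t)))
        = ∫ t in (0:ℝ)..x, (hβ₁ t * (g₁ t * (kβ₂ t * C t))) * A t := by
      rw [← intervalIntegral.integral_add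
        (f := fun t => hβ₁ t * (g₁ t * (kβ₂ t * D t)))
        (g := fun t => hβ₁ t * (g₁ t * (kβ₂ t * E t)))
        ((hhβ₁.mul (hg₁.mul (hkβ₂.mul hIntD))).intervalIntegrable 0 x)
        ((hhβ₁.mul (hg₁.mul (hkβ₂.mul hIntE))).intervalIntegrable 0 x)]
      exact intervalIntegral.integral_congr fun t _ => by
        linear_combination (hβ₁ t * (g₁ t * kβ₂ t)) * hDE t
    rw [h23]
    have := prod_prim (fun s => hα s * f s) (fun s => hβ₁ s * (g₁ s * (kβ₂ s * C s)))
      (hhα.mul hf) (hhβ₁.mul (hg₁.mul (hkβ₂.mul hCc))) x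
    rw [← this, ← intervalIntegral.integral_add
      (f := fun t => hα t * (f t * B t))
      (g := fun t => hβ₁ t * (g₁ t * (kβ₂ t * C t)) * A t)
      (((hhα.mul hf).mul hBc).intervalIntegrable 0 x |>.congr
        (fun s _ => by simp [mul_assoc]))
      (((hhβ₁.mul (hg₁.mul (hkβ₂.mul hCc))).mul hAc).intervalIntegrable 0 x |>.congr
        (fun s _ => by simp [mul_assoc]))]
    exact intervalIntegral.integral_congr fun t _ => by ring
  -- finish
  rw [hPα x, hPB x, hT1, hT2, hT3]
  simp only [τα, τβ₁]
  have e1 : kβ₁ x / kβ₁ 0 * a x * (kα x * (kβ₁ 0 * (∫ t in (0:ℝ)..x, hα t * (f t * B t))))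
      = a x * kα x * kβ₁ x * ∫ t in (0:ℝ)..x, hα t * (f t * B t) := by
    field_simp
    rw [div_eq_iff (hkβ₁0 0)]
    ring
  have e2 : ∀ I : ℝ, kα x / kα 0 * a x * (kβ₁ x * (kα 0 * I))
      = a x * kα x * kβ₁ x * I := by
    intro I; field_simp [hkα0 0]
  rw [e1, e2, e2]
  linear_combination (-(a x * kα x * kβ₁ x)) * hkey
end

section
/- (Operator-linear reduction of a triple product.) With separable Volterra operators P_α, P_β, P_γ and twists τ_α, τ_β, τ_γ as above, for continuous a, f, g, h: a·P_α(f)·P_β(g)·P_γ(h) = τ_α τ_β a·P_γ(τ_α⁻¹ h·P_α(τ_β⁻¹ f·P_β(g))) + τ_γ τ_β a·P_α(τ_γ⁻¹ f·P_γ(τ_β⁻¹ h·P_β(g))) + τ_γ τ_β a·P_α(τ_β⁻¹ f·P_β(τ_γ⁻¹ g·P_γ(h))) + τ_β τ_α a·P_γ(τ_β⁻¹ h·P_β(τ_α⁻¹ g·P_α(f))) + τ_γ τ_α a·P_β(τ_γ⁻¹ g·P_γ(τ_α⁻¹ h·P_α(f))) + τ_γ τ_α a·P_β(τ_α⁻¹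 g·P_α(τ_γ⁻¹ f·P_γ(h))). -/
open intervalIntegral MeasureTheory

noncomputable def I1 (F : ℝ → ℝ) (x : ℝ) : ℝ := ∫ t in (0:ℝ)..x, F t

lemma contI1 {F : ℝ → ℝ} (hF : Continuous F) : Continuous (I1 F) :=
  continuous_iff_continuousAt.mpr fun t =>
    ((hF.integral_hasStrictDerivAt 0 t).hasDerivAt).continuousAt

lemma shuffle2 {F G : ℝ → ℝ} (hF : Continuous F) (hG : Continuous G) (x : ℝ) :
    I1 F x * I1 G x =
      I1 (fun t => F t * I1 G t) x + I1 (fun t => G t * I1 F t) x := by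
  have h1 : ∫ t in (0:ℝ)..x, F t * I1 G t + I1 F t * G t
      = I1 F x * I1 G x - I1 F 0 * I1 G 0 := by
    apply integral_deriv_mul_eq_sub_of_hasDerivAt
      (contI1 hF).continuousOn (contI1 hG).continuousOn
      (fun t _ => (hF.integral_hasStrictDerivAt 0 t).hasDerivAt)
      (fun t _ => (hG.integral_hasStrictDerivAt 0 t).hasDerivAt)
      (hF.intervalIntegrable _ _) (hG.intervalIntegrable _ _)
  have h0 : I1 F 0 = 0 := intervalIntegral.integral_same
  rw [h0, zero_mul, sub_zero] at h1
  show I1 F x * I1 G x = (∫ t in (0:ℝ)..x, F t * I1 G t) + ∫ t in (0:ℝ)..x, G t * I1 F t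
  rw [← intervalIntegral.integral_add (f := fun t => F t * I1 G t) (g := fun t => G t * I1 F t)
    ((hF.mul (contI1 hG)).intervalIntegrable _ _)
    ((hG.mul (contI1 hF)).intervalIntegrable _ _), ← h1]
  congr 1; ext t; ring

noncomputable def I2 (F G : ℝ → ℝ) : ℝ → ℝ := I1 (fun t => F t * I1 G t)
noncomputable def I3 (F G H : ℝ → ℝ) : ℝ → ℝ := I1 (fun t => F t * I2 G H t)

lemma contI2 {F G : ℝ → ℝ} (hF : Continuous F) (hG : Continuous G) :
    Continuous (I2 F G) := contI1 (hF.mul (contI1 hG))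

lemma shuffle3 {F G H : ℝ → ℝ} (hF : Continuous F) (hG : Continuous G)
    (hH : Continuous H) (x : ℝ) :
    I1 F x * I1 G x * I1 H x =
      I3 F G H x + I3 F H G x + I3 G F H x + I3 G H F x + I3 H F G x + I3 H G F x := by
  have key : ∀ (P Q R : ℝ → ℝ), Continuous P → Continuous Q → Continuous R →
      I1 (fun t => P t * I1 Q t * I1 R t) x = I3 P Q R x + I3 P R Q x := by
    intro P Q R hP hQ hR
    have he : (fun t => P t * I1 Q t * I1 R t)
        = fun t => P t * I2 Q R t + P t * I2 R Q t := by
      funext t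
      rw [mul_assoc, shuffle2 hQ hR t, I2, I2]
      ring
    rw [he, I3, I3, I1, I1, I1, intervalIntegral.integral_add (f := fun t => P t * I2 Q R t) (g := fun t => P t * I2 R Q t)
      ((hP.mul (contI2 hQ hR)).intervalIntegrable _ _)
      ((hP.mul (contI2 hR hQ)).intervalIntegrable _ _)]
  rw [shuffle2 hF hG x, add_mul, shuffle2 (F := fun t => F t * I1 G t) (hF.mul (contI1 hG)) hH x,
    shuffle2 (F := fun t => G t * I1 F t) (hG.mul (contI1 hF)) hH x]
  rw [key F G H hF hG hH, key G F H hG hF hH,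
    show I1 (fun t => H t * I1 (fun t => F t * I1 G t) t) x = I3 H F G x from rfl,
    show I1 (fun t => H t * I1 (fun t => G t * I1 F t) t) x = I3 H G F x from rfl]
  ring

lemma I1_const_mul (c : ℝ) (F : ℝ → ℝ) (x : ℝ) :
    I1 (fun t => c * F t) x = c * I1 F x := intervalIntegral.integral_const_mul c F

lemma volterra_eq (k h f : ℝ → ℝ) (x : ℝ) :
    volterraP k h f x = k x * I1 (fun t => h t * f t) x := by
  simp only [volterraP, I1, mul_assoc, intervalIntegral.integral_const_mul]

lemma comp1 (k h p w : ℝ → ℝ) (hk0 : ∀ x, k x ≠ 0) :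
    (fun u => (k u / k 0)⁻¹ * p u * volterraP k h w u)
      = fun u => k 0 * (p u * I1 (fun s => h s * w s) u) := by
  funext u
  rw [volterra_eq]
  have h1 := hk0 u
  have h2 := hk0 0
  field_simp

lemma term_eq (k1 h1 k2 h2 k3 h3 p2 p3 w : ℝ → ℝ)
    (hk2 : ∀ x, k2 x ≠ 0) (hk3 : ∀ x, k3 x ≠ 0) (x : ℝ) :
    volterraP k1 h1 (fun t => (k2 t / k2 0)⁻¹ * p2 t *
        volterraP k2 h2 (fun u => (k3 u / k3 0)⁻¹ * p3 u * volterraP k3 h3 w u) t) x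
      = k1 x * (k2 0 * (k3 0 *
          I3 (fun t => h1 t * p2 t) (fun t => h2 t * p3 t) (fun t => h3 t * w t) x)) := by
  rw [comp1 k3 h3 p3 w hk3]
  have e2 : (fun t => (k2 t / k2 0)⁻¹ * p2 t *
      volterraP k2 h2 (fun u => k3 0 * (p3 u * I1 (fun s => h3 s * w s) u)) t)
      = fun t => k2 0 * (k3 0 *
          (p2 t * I2 (fun s => h2 s * p3 s) (fun s => h3 s * w s) t)) := by
    funext t
    rw [volterra_eq]
    have hI : I1 (fun s => h2 s * (k3 0 * (p3 s * I1 (fun s => h3 s * w s) s))) t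
        = k3 0 * I2 (fun s => h2 s * p3 s) (fun s => h3 s * w s) t := by
      rw [I2, ← I1_const_mul]
      congr 1
      funext s
      ring
    rw [hI]
    have h1 := hk2 t
    have h2' := hk2 0
    field_simp
  rw [e2, volterra_eq]
  have hI : I1 (fun t => h1 t * (k2 0 * (k3 0 *
      (p2 t * I2 (fun s => h2 s * p3 s) (fun s => h3 s * w s) t)))) x
      = k2 0 * k3 0 * I3 (fun t => h1 t * p2 t) (fun t => h2 t * p3 t)
          (fun t => h3 t * w t) x := by
    rw [I3, ← I1_const_mul]
    congr 1
    funext t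
    ring
  rw [hI]
  ring

/-- Operator-linear reduction of a triple product `a·P_α(f)·P_β(g)·P_γ(h)`
into the six iterated integrals indexed by the shuffles of `α, β, γ`. -/
theorem reduction_triple_product
    (kα hα kβ hβ kγ hγ : ℝ → ℝ)
    (hkα : Continuous kα) (hhα : Continuous hα)
    (hkβ : Continuous kβ) (hhβ : Continuous hβ)
    (hkγ : Continuous kγ) (hhγ : Continuous hγ)
    (hkα0 : ∀ x, kα x ≠ 0) (hkβ0 : ∀ x, kβ x ≠ 0) (hkγ0 : ∀ x, kγ x ≠ 0)
    (a f g h : ℝ → ℝ)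
    (ha : Continuous a) (hf : Continuous f) (hg : Continuous g) (hh : Continuous h) :
    let τα : ℝ → ℝ := fun x => kα x / kα 0
    let τβ : ℝ → ℝ := fun x => kβ x / kβ 0
    let τγ : ℝ → ℝ := fun x => kγ x / kγ 0
    ∀ x : ℝ,
      a x * volterraP kα hα f x * volterraP kβ hβ g x * volterraP kγ hγ h x =
        τα x * τβ x * a x * volterraP kγ hγ
          (fun t => (τα t)⁻¹ * h t *
            volterraP kα hα (fun u => (τβ u)⁻¹ * f u * volterraP kβ hβ g u) t) x +
        τγ x * τβ x * a x * volterraP kα hα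
          (fun t => (τγ t)⁻¹ * f t *
            volterraP kγ hγ (fun u => (τβ u)⁻¹ * h u * volterraP kβ hβ g u) t) x +
        τγ x * τβ x * a x * volterraP kα hα
          (fun t => (τβ t)⁻¹ * f t *
            volterraP kβ hβ (fun u => (τγ u)⁻¹ * g u * volterraP kγ hγ h u) t) x +
        τβ x * τα x * a x * volterraP kγ hγ
          (fun t => (τβ t)⁻¹ * h t *
            volterraP kβ hβ (fun u => (τα u)⁻¹ * g u * volterraP kα hα f u) t) x +
        τγ x * τα x * a x * volterraP kβ hβ
          (fun t => (τγ t)⁻¹ * g t *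
            volterraP kγ hγ (fun u => (τα u)⁻¹ * h u * volterraP kα hα f u) t) x +
        τγ x * τα x * a x * volterraP kβ hβ
          (fun t => (τα t)⁻¹ * g t *
            volterraP kα hα (fun u => (τγ u)⁻¹ * f u * volterraP kγ hγ h u) t) x := by
  intro τα τβ τγ x
  have hτα : τα = fun y => kα y / kα 0 := rfl
  have hτβ : τβ = fun y => kβ y / kβ 0 := rfl
  have hτγ : τγ = fun y => kγ y / kγ 0 := rfl
  simp only [hτα, hτβ, hτγ]
  rw [term_eq kγ hγ kα hα kβ hβ h f g hkα0 hkβ0 x,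
      term_eq kα hα kγ hγ kβ hβ f h g hkγ0 hkβ0 x,
      term_eq kα hα kβ hβ kγ hγ f g h hkβ0 hkγ0 x,
      term_eq kγ hγ kβ hβ kα hα h g f hkβ0 hkα0 x,
      term_eq kβ hβ kγ hγ kα hα g h f hkγ0 hkα0 x,
      term_eq kβ hβ kα hα kγ hγ g f h hkα0 hkγ0 x,
      volterra_eq kα hα f x, volterra_eq kβ hβ g x, volterra_eq kγ hγ h x]
  have hs := shuffle3 (F := fun t => hα t * f t) (G := fun t => hβ t * g t)
    (H := fun t => hγ t * h t) (hhα.mul hf) (hhβ.mul hg) (hhγ.mul hh) x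
  have h10 := hkα0 0
  have h20 := hkβ0 0
  have h30 := hkγ0 0
  field_simp
  linear_combination (a x * kα x * kβ x * kγ x) * hs
end

section
/- (Constructive form of the operator-linearity theorem.) Every vertex-edge decorated rooted forest F (vertices decorated by continuous functions, edges by indices of separable Volterra kernels with nonvanishing x-factors) is equivalent, via finitely many applications of the matching twisted Rota-Baxter identity, to a forest F′ containing no branching points; equivalently, every separable Volterra integral polynomial equals a sum of iterated integrals, where the equality holds as functions. -/
/-- Vertex-edge decorated rooted trees: each vertex is decorated by a function
(an element of `C(ℝ)`), and each edge to a child is decorated by a kernel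
index from `Ω`. -/
inductive DTree (Ω : Type) : Type
  | node : (ℝ → ℝ) → List (Ω × DTree Ω) → DTree Ω

namespace DTree

variable {Ω : Type}

/-- The integral polynomial represented by a decorated tree: an edge labelled
`ω` from parent `f` to child `g` represents `f · P_ω(g)` where
`P_ω(g)(x) = ∫₀ˣ k_ω(x) h_ω(t) g(t) dt`, and a branching point represents the
product of the integrals of its branches. -/
noncomputable def val (k h : Ω → ℝ → ℝ) : DTree Ω → ℝ → ℝ
  | .node f cs => fun x =>
      f x * (cs.attach.map fun c =>
        ∫ t in (0:ℝ)..x, k c.1.1 x * h c.1.1 t * val k h c.1.2 t).prod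
decreasing_by
  obtain ⟨⟨ω, t⟩, hc⟩ := c
  have := List.sizeOf_lt_of_mem hc
  simp only [DTree.node.sizeOf_spec, Prod.mk.sizeOf_spec] at this ⊢
  omega

/-- All vertex decorations in the tree are continuous. -/
def AllCont : DTree Ω → Prop
  | .node f cs => Continuous f ∧ ∀ c ∈ cs, AllCont c.2
decreasing_by
  have h := List.sizeOf_lt_of_mem ‹c ∈ cs›
  obtain ⟨ω, t⟩ := c
  simp only [DTree.node.sizeOf_spec, Prod.mk.sizeOf_spec] at h ⊢
  omega

/-- The tree has no branching points, i.e. it is a chain, representing an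
iterated integral. -/
def NoBranch : DTree Ω → Prop
  | .node _ cs => cs.length ≤ 1 ∧ ∀ c ∈ cs, NoBranch c.2
decreasing_by
  have h := List.sizeOf_lt_of_mem ‹c ∈ cs›
  obtain ⟨ω, t⟩ := c
  simp only [DTree.node.sizeOf_spec, Prod.mk.sizeOf_spec] at h ⊢
  omega

end DTree

namespace OLR
open DTree

variable {Ω : Type} (k h : Ω → ℝ → ℝ)

/-- The Volterra operator. -/
noncomputable def P (ω : Ω) (u : ℝ → ℝ) : ℝ → ℝ :=
  fun x => k ω x * ∫ t in (0:ℝ)..x, h ω t * u t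

lemma val_node (f : ℝ → ℝ) (cs : List (Ω × DTree Ω)) (x : ℝ) :
    val k h (node f cs) x
      = f x * (cs.map fun c => P k h c.1 (val k h c.2) x).prod := by
  rw [val]
  dsimp only
  congr 1
  rw [← List.attach_map_val (l := cs) (f := fun c => P k h c.1 (val k h c.2) x)]
  congr 1
  apply List.map_congr_left
  intro c _
  simp only [P, mul_assoc, intervalIntegral.integral_const_mul]


lemma val_single (c : ℝ → ℝ) (α : Ω) (T : DTree Ω) (x : ℝ) :
    val k h (node c [(α, T)]) x = c x * P k h α (val k h T) x := by
  rw [val_node]; simp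

lemma val_nil (c : ℝ → ℝ) (x : ℝ) : val k h (node c []) x = c x := by
  rw [val_node]; simp

/-- Multiply the root decoration by a function. -/
def mulRoot (g : ℝ → ℝ) : DTree Ω → DTree Ω
  | node f cs => node (fun x => g x * f x) cs

lemma val_mulRoot (g : ℝ → ℝ) (T : DTree Ω) (x : ℝ) :
    val k h (mulRoot g T) x = g x * val k h T x := by
  obtain ⟨f, cs⟩ := T
  rw [mulRoot, val_node, val_node, mul_assoc]

lemma mulRoot_noBranch {g : ℝ → ℝ} {T : DTree Ω} (hT : T.NoBranch) :
    (mulRoot g T).NoBranch := by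
  obtain ⟨f, cs⟩ := T
  rw [mulRoot, NoBranch]; rw [NoBranch] at hT; exact hT

lemma mulRoot_allCont {g : ℝ → ℝ} (hg : Continuous g) {T : DTree Ω} (hT : T.AllCont) :
    (mulRoot g T).AllCont := by
  obtain ⟨f, cs⟩ := T
  rw [mulRoot, AllCont]; rw [AllCont] at hT; exact ⟨hg.mul hT.1, hT.2⟩

/-- A list of chains. -/
def Good (L : List (DTree Ω)) : Prop := ∀ T ∈ L, T.NoBranch ∧ T.AllCont

lemma good_append {L₁ L₂ : List (DTree Ω)} (h₁ : Good L₁) (h₂ : Good L₂) :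
    Good (L₁ ++ L₂) := by
  intro T hT
  rcases List.mem_append.1 hT with hT | hT
  exacts [h₁ T hT, h₂ T hT]

/-- The sum of the values of a list of trees. -/
noncomputable def SumVal (L : List (DTree Ω)) : ℝ → ℝ :=
  fun x => (L.map fun T => val k h T x).sum

lemma sumVal_append (L₁ L₂ : List (DTree Ω)) (x : ℝ) :
    SumVal k h (L₁ ++ L₂) x = SumVal k h L₁ x + SumVal k h L₂ x := by
  simp [SumVal]

lemma sumVal_nil (x : ℝ) : SumVal k h ([] : List (DTree Ω)) x = 0 := by simp [SumVal]

lemma sumVal_cons (C : DTree Ω) (L : List (DTree Ω)) (x : ℝ) :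
    SumVal k h (C :: L) x = val k h C x + SumVal k h L x := by simp [SumVal]

/-- Auxiliary size lemma. -/
lemma sizeOf_child_lt {f : ℝ → ℝ} {cs : List (Ω × DTree Ω)} {c : Ω × DTree Ω}
    (hc : c ∈ cs) : sizeOf c.2 < sizeOf (node f cs) := by
  have := List.sizeOf_lt_of_mem hc
  obtain ⟨ω, t⟩ := c
  simp only [DTree.node.sizeOf_spec, Prod.mk.sizeOf_spec] at this ⊢
  omega

lemma one_le_sizeOf (T : DTree Ω) : 1 ≤ sizeOf T := by
  obtain ⟨f, cs⟩ := T
  simp only [DTree.node.sizeOf_spec]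
  omega

lemma cont_listProd {ι : Type _} (F : ι → ℝ → ℝ) (l : List ι)
    (hl : ∀ i ∈ l, Continuous (F i)) :
    Continuous fun x => (l.map fun i => F i x).prod := by
  induction l with
  | nil => simpa using continuous_const
  | cons i rest ihc =>
    simp only [List.map_cons, List.prod_cons]
    exact (hl i (List.mem_cons_self)).mul
      (ihc fun j hj => hl j (List.mem_cons_of_mem _ hj))

/-- Primitive. -/
noncomputable def prim (g : ℝ → ℝ) : ℝ → ℝ := fun x => ∫ t in (0:ℝ)..x, g t

lemma cont_prim {g : ℝ → ℝ} (hg : Continuous g) : Continuous (prim g) :=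
  intervalIntegral.continuous_primitive (fun a b => hg.intervalIntegrable a b) 0

lemma hasDerivAt_prim {g : ℝ → ℝ} (hg : Continuous g) (t : ℝ) :
    HasDerivAt (prim g) (g t) t :=
  intervalIntegral.integral_hasDerivAt_right (hg.intervalIntegrable 0 t)
    (hg.stronglyMeasurableAtFilter _ _) hg.continuousAt

lemma cont_P (hk : ∀ ω, Continuous (k ω)) (hh : ∀ ω, Continuous (h ω))
    {ω : Ω} {u : ℝ → ℝ} (hu : Continuous u) : Continuous (P k h ω u) :=
  (hk ω).mul (cont_prim ((hh ω).mul hu))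

lemma cont_val (hk : ∀ ω, Continuous (k ω)) (hh : ∀ ω, Continuous (h ω)) : ∀ (n : ℕ) (T : DTree Ω), sizeOf T ≤ n → T.AllCont →
    Continuous (val k h T) := by
  intro n
  induction n with
  | zero =>
    intro T hT
    have := one_le_sizeOf T
    omega
  | succ n ih =>
    rintro ⟨f, cs⟩ hs ha
    rw [AllCont] at ha
    obtain ⟨hf, hcs⟩ := ha
    have hcont : ∀ c ∈ cs, Continuous (val k h c.2) := fun c hc =>
      ih c.2 (by have := sizeOf_child_lt (f := f) hc; omega) (hcs c hc)
    have hprod : Continuous fun x => (cs.map fun c => P k h c.1 (val k h c.2) x).prod :=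
      cont_listProd (fun c x => P k h c.1 (val k h c.2) x) cs
        (fun c hc => cont_P k h hk hh (hcont c hc))
    have : Continuous fun x => f x * (cs.map fun c => P k h c.1 (val k h c.2) x).prod :=
      hf.mul hprod
    convert this using 1
    funext x
    exact val_node k h f cs x

lemma cont_val' (hk : ∀ ω, Continuous (k ω)) (hh : ∀ ω, Continuous (h ω)) {T : DTree Ω} (hT : T.AllCont) : Continuous (val k h T) :=
  cont_val k h hk hh (sizeOf T) T le_rfl hT

lemma cont_sumVal (hk : ∀ ω, Continuous (k ω)) (hh : ∀ ω, Continuous (h ω)) {L : List (DTree Ω)} (hL : Good L) : Continuous (SumVal k h L) := by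
  induction L with
  | nil =>
    rw [show SumVal k h ([] : List (DTree Ω)) = fun _ => 0 from funext (sumVal_nil k h)]
    exact continuous_const
  | cons C rest ihc =>
    have h1 : Continuous (val k h C) := cont_val' k h hk hh (hL C (List.mem_cons_self)).2
    have h2 : Continuous (SumVal k h rest) := ihc fun T hT => hL T (List.mem_cons_of_mem _ hT)
    have heq : SumVal k h (C :: rest) = fun x => val k h C x + SumVal k h rest x :=
      funext (sumVal_cons k h C rest)
    rw [heq]; exact h1.add h2

lemma P_congr {u v : ℝ → ℝ} (huv : ∀ t, u t = v t) (ω : Ω) (x : ℝ) :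
    P k h ω u x = P k h ω v x := by
  unfold P
  congr 1
  apply intervalIntegral.integral_congr
  intro t _
  simp only [huv t]

lemma P_add (hh : ∀ ω, Continuous (h ω)) {u v : ℝ → ℝ}
    (hu : Continuous u) (hv : Continuous v) (ω : Ω) (x : ℝ) :
    P k h ω (fun t => u t + v t) x = P k h ω u x + P k h ω v x := by
  unfold P
  rw [← mul_add]
  congr 1
  have e : ∀ t, h ω t * (u t + v t) = h ω t * u t + h ω t * v t := fun t => by ring
  rw [intervalIntegral.integral_congr (g := fun t => h ω t * u t + h ω t * v t)
    (fun t _ => e t)]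
  exact intervalIntegral.integral_add (((hh ω).mul hu).intervalIntegrable 0 x)
    (((hh ω).mul hv).intervalIntegrable 0 x)

lemma prod_prim {u v : ℝ → ℝ} (hu : Continuous u) (hv : Continuous v) (x : ℝ) :
    prim u x * prim v x
      = ∫ t in (0:ℝ)..x, (u t * prim v t + v t * prim u t) := by
  have key : ∀ t ∈ Set.uIcc (0:ℝ) x,
      HasDerivAt (fun s => prim u s * prim v s) (u t * prim v t + v t * prim u t) t := by
    intro t _
    have h1 := (hasDerivAt_prim hu t).mul (hasDerivAt_prim hv t)
    rw [show u t * prim v t + v t * prim u t = u t * prim v t + prim u t * v t by ring]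
    exact h1
  have hint : IntervalIntegrable (fun t => u t * prim v t + v t * prim u t)
      MeasureTheory.volume 0 x :=
    ((hu.mul (cont_prim hv)).add (hv.mul (cont_prim hu))).intervalIntegrable 0 x
  have := intervalIntegral.integral_eq_sub_of_hasDerivAt key hint
  rw [this]
  simp [prim]

/-- The (matching twisted Rota–Baxter) product identity for Volterra operators. -/
lemma RB (hh : ∀ ω, Continuous (h ω)) (hk0 : ∀ ω x, k ω x ≠ 0)
    {u v : ℝ → ℝ} (hu : Continuous u) (hv : Continuous v) (α β : Ω) (x : ℝ) :
    P k h α u x * P k h β v x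
      = k β x * P k h α (fun t => u t * (P k h β v t / k β t)) x
      + k α x * P k h β (fun t => v t * (P k h α u t / k α t)) x := by
  have ha : Continuous fun t => h α t * u t := (hh α).mul hu
  have hb : Continuous fun t => h β t * v t := (hh β).mul hv
  have e1 : ∀ t, P k h β v t / k β t = prim (fun s => h β s * v s) t := by
    intro t
    rw [P, prim, mul_div_cancel_left₀ _ (hk0 β t)]
  have e2 : ∀ t, P k h α u t / k α t = prim (fun s => h α s * u s) t := by
    intro t
    rw [P, prim, mul_div_cancel_left₀ _ (hk0 α t)]
  have hint1 : IntervalIntegrable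
      (fun t => h α t * u t * prim (fun s => h β s * v s) t) MeasureTheory.volume 0 x :=
    (ha.mul (cont_prim hb)).intervalIntegrable 0 x
  have hint2 : IntervalIntegrable
      (fun t => h β t * v t * prim (fun s => h α s * u s) t) MeasureTheory.volume 0 x :=
    (hb.mul (cont_prim ha)).intervalIntegrable 0 x
  have i1 : P k h α (fun t => u t * (P k h β v t / k β t)) x
      = k α x * ∫ t in (0:ℝ)..x, h α t * u t * prim (fun s => h β s * v s) t := by
    simp only [P, prim]
    congr 1
    apply intervalIntegral.integral_congr
    intro t _
    dsimp only
    rw [mul_div_cancel_left₀ _ (hk0 β t)]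
    ring
  have i2 : P k h β (fun t => v t * (P k h α u t / k α t)) x
      = k β x * ∫ t in (0:ℝ)..x, h β t * v t * prim (fun s => h α s * u s) t := by
    simp only [P, prim]
    congr 1
    apply intervalIntegral.integral_congr
    intro t _
    dsimp only
    rw [mul_div_cancel_left₀ _ (hk0 α t)]
    ring
  calc P k h α u x * P k h β v x
      = (k α x * k β x) * (prim (fun s => h α s * u s) x * prim (fun s => h β s * v s) x) := by
        simp only [P, prim]; ring
    _ = (k α x * k β x) * ∫ t in (0:ℝ)..x,
          (h α t * u t * prim (fun s => h β s * v s) t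
            + h β t * v t * prim (fun s => h α s * u s) t) := by
        rw [prod_prim ha hb]
    _ = k β x * (k α x * ∫ t in (0:ℝ)..x, h α t * u t * prim (fun s => h β s * v s) t)
        + k α x * (k β x * ∫ t in (0:ℝ)..x, h β t * v t * prim (fun s => h α s * u s) t) := by
        rw [intervalIntegral.integral_add hint1 hint2]; ring
    _ = _ := by
        rw [i1, i2]

lemma P_sumVal (hk : ∀ ω, Continuous (k ω)) (hh : ∀ ω, Continuous (h ω))
    {L : List (DTree Ω)} (hL : Good L) (ω : Ω) (x : ℝ) :
    P k h ω (SumVal k h L) x = (L.map fun C => P k h ω (val k h C) x).sum := by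
  induction L with
  | nil =>
    simp only [List.map_nil, List.sum_nil]
    rw [P_congr k h (v := fun _ => 0) (fun t => sumVal_nil k h t) ω x]
    simp [P]
  | cons C rest ihc =>
    have h1 : Continuous (val k h C) := cont_val' k h hk hh (hL C (List.mem_cons_self)).2
    have hrest : Good rest := fun T hT => hL T (List.mem_cons_of_mem _ hT)
    have h2 : Continuous (SumVal k h rest) := cont_sumVal k h hk hh hrest
    rw [P_congr k h (v := fun t => val k h C t + SumVal k h rest t)
      (fun t => sumVal_cons k h C rest t) ω x, P_add k h hh h1 h2 ω x]
    simp only [List.map_cons, List.sum_cons]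
    rw [ihc hrest]

lemma push (hk : ∀ ω, Continuous (k ω)) (hh : ∀ ω, Continuous (h ω))
    (c g : ℝ → ℝ) (hg : Continuous g) (α : Ω) (L : List (DTree Ω)) (hL : Good L) (x : ℝ) :
    c x * P k h α (fun t => g t * SumVal k h L t) x
      = SumVal k h (L.map fun C => node c [(α, mulRoot g C)]) x := by
  induction L with
  | nil =>
    rw [P_congr k h (v := fun _ => 0) (fun t => by simp [sumVal_nil]) α x]
    simp [SumVal, P]
  | cons C rest ihc =>
    have hC := hL C (List.mem_cons_self)
    have hrest : Good rest := fun T hT => hL T (List.mem_cons_of_mem _ hT)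
    have h1 : Continuous (val k h C) := cont_val' k h hk hh hC.2
    have h2 : Continuous (SumVal k h rest) := cont_sumVal k h hk hh hrest
    rw [P_congr k h
      (v := fun t => g t * val k h C t + g t * SumVal k h rest t)
      (fun t => by rw [sumVal_cons]; ring) α x,
      P_add k h hh (u := fun t => g t * val k h C t) (v := fun t => g t * SumVal k h rest t)
        (hg.mul h1) (hg.mul h2) α x, mul_add, ihc hrest]
    simp only [List.map_cons]
    rw [sumVal_cons]
    congr 1
    rw [val_single]
    congr 1
    exact P_congr k h (fun t => (val_mulRoot k h g C t).symm) α x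

lemma half (hk : ∀ ω, Continuous (k ω)) (hh : ∀ ω, Continuous (h ω))
    (hk0 : ∀ ω x, k ω x ≠ 0) {n : ℕ}
    (IH : ∀ (α β : Ω) (C₁ C₂ : DTree Ω), sizeOf C₁ + sizeOf C₂ ≤ n →
      C₁.NoBranch → C₁.AllCont → C₂.NoBranch → C₂.AllCont →
      ∃ L, Good L ∧ ∀ x,
        P k h α (val k h C₁) x * P k h β (val k h C₂) x = SumVal k h L x)
    (α β : Ω) (C₁ C₂ : DTree Ω) (hs : sizeOf C₁ + sizeOf C₂ ≤ n + 1)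
    (hb₁ : C₁.NoBranch) (ha₁ : C₁.AllCont) (hb₂ : C₂.NoBranch) (ha₂ : C₂.AllCont) :
    ∃ L, Good L ∧ ∀ x,
      k β x * P k h α (fun t => val k h C₁ t * (P k h β (val k h C₂) t / k β t)) x
        = SumVal k h L x := by
  obtain ⟨g₁, cs₁⟩ := C₁
  rw [NoBranch] at hb₁
  rw [AllCont] at ha₁
  obtain ⟨L', hGL', hsum⟩ : ∃ L', Good L' ∧ ∀ t,
      val k h (node g₁ cs₁) t * (P k h β (val k h C₂) t / k β t)
        = (g₁ t / k β t) * SumVal k h L' t := by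
    match cs₁, hb₁ with
    | [], _ =>
      refine ⟨[node (fun _ => (1:ℝ)) [(β, C₂)]], ?_, ?_⟩
      · intro T hT
        rw [List.mem_singleton] at hT
        subst hT
        constructor
        · rw [NoBranch]
          refine ⟨by simp, ?_⟩
          intro c hc
          rw [List.mem_singleton] at hc
          subst hc
          exact hb₂
        · rw [AllCont]
          refine ⟨continuous_const, ?_⟩
          intro c hc
          rw [List.mem_singleton] at hc
          subst hc
          exact ha₂
      · intro t
        rw [val_nil, sumVal_cons, sumVal_nil, val_single]
        ring
    | [(γ, D₁)], hb₁ =>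
      have hsz : sizeOf D₁ + sizeOf C₂ ≤ n := by
        have := sizeOf_child_lt (f := g₁) (cs := [(γ, D₁)]) (c := (γ, D₁)) (by simp)
        simp only at this
        omega
      obtain ⟨L', hGL', hprod⟩ := IH γ β D₁ C₂ hsz
        (hb₁.2 (γ, D₁) (by simp)) (ha₁.2 (γ, D₁) (by simp)) hb₂ ha₂
      refine ⟨L', hGL', fun t => ?_⟩
      rw [val_single, ← hprod t]
      ring
    | c₁ :: c₂ :: rest, hb₁ => simp at hb₁
  have hgdiv : Continuous fun t => g₁ t / k β t :=
    ha₁.1.div (hk β) fun t => hk0 β t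
  refine ⟨L'.map fun C => node (k β) [(α, mulRoot (fun t => g₁ t / k β t) C)], ?_, ?_⟩
  · intro T hT
    rw [List.mem_map] at hT
    obtain ⟨C, hC, rfl⟩ := hT
    constructor
    · rw [NoBranch]
      refine ⟨by simp, ?_⟩
      intro c hc
      rw [List.mem_singleton] at hc
      subst hc
      exact mulRoot_noBranch (hGL' C hC).1
    · rw [AllCont]
      refine ⟨hk β, ?_⟩
      intro c hc
      rw [List.mem_singleton] at hc
      subst hc
      exact mulRoot_allCont hgdiv (hGL' C hC).2
  · intro x
    rw [P_congr k h (v := fun t => (g₁ t / k β t) * SumVal k h L' t) hsum α x]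
    exact push k h hk hh (k β) _ hgdiv α L' hGL' x

lemma keyK (hk : ∀ ω, Continuous (k ω)) (hh : ∀ ω, Continuous (h ω))
    (hk0 : ∀ ω x, k ω x ≠ 0) :
    ∀ (n : ℕ) (α β : Ω) (C₁ C₂ : DTree Ω), sizeOf C₁ + sizeOf C₂ ≤ n →
      C₁.NoBranch → C₁.AllCont → C₂.NoBranch → C₂.AllCont →
      ∃ L, Good L ∧ ∀ x,
        P k h α (val k h C₁) x * P k h β (val k h C₂) x = SumVal k h L x := by
  intro n
  induction n with
  | zero =>
    intro α β C₁ C₂ hs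
    have := one_le_sizeOf C₁
    have := one_le_sizeOf C₂
    omega
  | succ n ih =>
    intro α β C₁ C₂ hs hb₁ ha₁ hb₂ ha₂
    obtain ⟨L₁, hG₁, he₁⟩ := half k h hk hh hk0 ih α β C₁ C₂ hs hb₁ ha₁ hb₂ ha₂
    obtain ⟨L₂, hG₂, he₂⟩ := half k h hk hh hk0 ih β α C₂ C₁ (by omega) hb₂ ha₂ hb₁ ha₁
    refine ⟨L₁ ++ L₂, good_append hG₁ hG₂, fun x => ?_⟩
    rw [RB k h hh hk0 (cont_val' k h hk hh ha₁) (cont_val' k h hk hh ha₂) α β x,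
      sumVal_append, he₁ x, he₂ x]

lemma sum_choice {ι : Type _} (G : ι → ℝ → ℝ) :
    ∀ l : List ι, (∀ a ∈ l, ∃ L, Good L ∧ ∀ x, G a x = SumVal k h L x) →
      ∃ L, Good L ∧ ∀ x, (l.map fun a => G a x).sum = SumVal k h L x := by
  intro l
  induction l with
  | nil => exact fun _ => ⟨[], fun T hT => absurd hT List.not_mem_nil, fun x => by
      simp [sumVal_nil]⟩
  | cons a t iht =>
    intro H
    obtain ⟨La, hGa, hea⟩ := H a (List.mem_cons_self)
    obtain ⟨Lt, hGt, het⟩ := iht fun b hb => H b (List.mem_cons_of_mem _ hb)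
    refine ⟨La ++ Lt, good_append hGa hGt, fun x => ?_⟩
    rw [List.map_cons, List.sum_cons, sumVal_append, hea x, het x]

lemma chainProd (hk : ∀ ω, Continuous (k ω)) (hh : ∀ ω, Continuous (h ω))
    (hk0 : ∀ ω x, k ω x ≠ 0) :
    ∀ (n : ℕ) (f : ℝ → ℝ) (ps : List (Ω × DTree Ω)), ps.length ≤ n →
      Continuous f → (∀ p ∈ ps, (p.2).NoBranch ∧ (p.2).AllCont) →
      ∃ L, Good L ∧ ∀ x,
        f x * (ps.map fun p => P k h p.1 (val k h p.2) x).prod = SumVal k h L x := by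
  intro n
  induction n with
  | zero =>
    intro f ps hlen hf hps
    match ps, hlen with
    | [], _ =>
      refine ⟨[node f []], ?_, fun x => ?_⟩
      · intro T hT
        rw [List.mem_singleton] at hT
        subst hT
        exact ⟨by rw [NoBranch]; exact ⟨by simp, by simp⟩,
          by rw [AllCont]; exact ⟨hf, by simp⟩⟩
      · rw [List.map_nil, List.prod_nil, mul_one, sumVal_cons, sumVal_nil, val_nil, add_zero]
  | succ n ih =>
    intro f ps hlen hf hps
    match ps, hlen, hps with
    | [], _, _ =>
      refine ⟨[node f []], ?_, fun x => ?_⟩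
      · intro T hT
        rw [List.mem_singleton] at hT
        subst hT
        exact ⟨by rw [NoBranch]; exact ⟨by simp, by simp⟩,
          by rw [AllCont]; exact ⟨hf, by simp⟩⟩
      · rw [List.map_nil, List.prod_nil, mul_one, sumVal_cons, sumVal_nil, val_nil, add_zero]
    | [p], _, hps =>
      obtain ⟨hbp, hap⟩ := hps p (by simp)
      refine ⟨[node f [p]], ?_, fun x => ?_⟩
      · intro T hT
        rw [List.mem_singleton] at hT
        subst hT
        constructor
        · rw [NoBranch]
          refine ⟨by simp, ?_⟩
          intro c hc
          rw [List.mem_singleton] at hc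
          subst hc
          exact hbp
        · rw [AllCont]
          refine ⟨hf, ?_⟩
          intro c hc
          rw [List.mem_singleton] at hc
          subst hc
          exact hap
      · obtain ⟨ω, T⟩ := p
        rw [List.map_cons, List.map_nil, List.prod_cons, List.prod_nil, mul_one,
          sumVal_cons, sumVal_nil, add_zero, val_single]
    | p :: q :: rest, hlen, hps =>
      have hlen' : rest.length + 2 ≤ n + 1 := by simpa using hlen
      obtain ⟨hbp, hap⟩ := hps p (by simp)
      obtain ⟨hbq, haq⟩ := hps q (by simp)
      obtain ⟨LK, hGK, heK⟩ := keyK k h hk hh hk0 (sizeOf p.2 + sizeOf q.2)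
        p.1 q.1 p.2 q.2 le_rfl hbp hap hbq haq
      have hchoice : ∀ C ∈ LK, ∃ L, Good L ∧ ∀ x,
          (fun C x => val k h C x *
            (f x * (rest.map fun p => P k h p.1 (val k h p.2) x).prod)) C x
            = SumVal k h L x := by
        intro C hC
        obtain ⟨gC, csC⟩ := C
        have hbC := (hGK _ hC).1
        have haC := (hGK _ hC).2
        rw [NoBranch] at hbC
        rw [AllCont] at haC
        obtain ⟨L, hGL, heL⟩ := ih (fun x => f x * gC x) (csC ++ rest)
          (by rw [List.length_append]; omega)
          (hf.mul haC.1)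
          (by
            intro pp hpp
            rcases List.mem_append.1 hpp with hpp | hpp
            · exact ⟨hbC.2 pp hpp, haC.2 pp hpp⟩
            · exact hps pp (List.mem_cons_of_mem _ (List.mem_cons_of_mem _ hpp)))
        refine ⟨L, hGL, fun x => ?_⟩
        dsimp only
        rw [← heL x, val_node, List.map_append, List.prod_append]
        ring
      obtain ⟨L, hGL, heL⟩ := sum_choice k h _ LK hchoice
      refine ⟨L, hGL, fun x => ?_⟩
      rw [← heL x]
      have hsum : (LK.map fun C => val k h C x *
          (f x * (rest.map fun p => P k h p.1 (val k h p.2) x).prod)).sum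
          = (LK.map fun C => val k h C x).sum *
            (f x * (rest.map fun p => P k h p.1 (val k h p.2) x).prod) :=
        List.sum_map_mul_right _ _ _
      rw [hsum]
      have : (LK.map fun C => val k h C x).sum = SumVal k h LK x := rfl
      rw [this, ← heK x, List.map_cons, List.map_cons, List.prod_cons, List.prod_cons]
      ring

lemma mixedProd (hk : ∀ ω, Continuous (k ω)) (hh : ∀ ω, Continuous (h ω))
    (hk0 : ∀ ω x, k ω x ≠ 0) :
    ∀ (cs qs : List (Ω × DTree Ω)) (f : ℝ → ℝ), Continuous f →
      (∀ q ∈ qs, (q.2).NoBranch ∧ (q.2).AllCont) →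
      (∀ c ∈ cs, ∃ Lc, Good Lc ∧ ∀ x, val k h c.2 x = SumVal k h Lc x) →
      ∃ L, Good L ∧ ∀ x,
        f x * ((qs ++ cs).map fun p => P k h p.1 (val k h p.2) x).prod
          = SumVal k h L x := by
  intro cs
  induction cs with
  | nil =>
    intro qs f hf hqs _
    simp only [List.append_nil]
    exact chainProd k h hk hh hk0 qs.length f qs le_rfl hf hqs
  | cons c rest ihM =>
    intro qs f hf hqs hdec
    obtain ⟨Lc, hGc, hec⟩ := hdec c (List.mem_cons_self)
    have hchoice : ∀ C ∈ Lc, ∃ L, Good L ∧ ∀ x,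
        (fun C x => f x *
          (((qs ++ [(c.1, C)]) ++ rest).map fun p => P k h p.1 (val k h p.2) x).prod) C x
          = SumVal k h L x := by
      intro C hC
      exact ihM (qs ++ [(c.1, C)]) f hf
        (by
          intro q hq
          rcases List.mem_append.1 hq with hq | hq
          · exact hqs q hq
          · rw [List.mem_singleton] at hq
            subst hq
            exact hGc C hC)
        (fun d hd => hdec d (List.mem_cons_of_mem _ hd))
    obtain ⟨L, hGL, heL⟩ := sum_choice k h _ Lc hchoice
    refine ⟨L, hGL, fun x => ?_⟩
    rw [← heL x]
    have e : P k h c.1 (val k h c.2) x = (Lc.map fun C => P k h c.1 (val k h C) x).sum := by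
      rw [P_congr k h hec c.1 x]
      exact P_sumVal k h hk hh hGc c.1 x
    have e2 : (Lc.map fun C => f x *
        (((qs ++ [(c.1, C)]) ++ rest).map fun p => P k h p.1 (val k h p.2) x).prod)
        = Lc.map fun C =>
            (f x * ((qs.map fun p => P k h p.1 (val k h p.2) x).prod *
              (rest.map fun p => P k h p.1 (val k h p.2) x).prod))
            * P k h c.1 (val k h C) x := by
      apply List.map_congr_left
      intro C _
      rw [List.map_append, List.prod_append, List.map_append, List.prod_append,
        List.map_cons, List.map_nil, List.prod_cons, List.prod_nil]
      ring
    rw [e2, List.sum_map_mul_left, ← e, List.map_append, List.prod_append,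
      List.map_cons, List.prod_cons]
    ring

lemma treeReduce (hk : ∀ ω, Continuous (k ω)) (hh : ∀ ω, Continuous (h ω))
    (hk0 : ∀ ω x, k ω x ≠ 0) :
    ∀ (n : ℕ) (T : DTree Ω), sizeOf T ≤ n → T.AllCont →
      ∃ L, Good L ∧ ∀ x, val k h T x = SumVal k h L x := by
  intro n
  induction n with
  | zero =>
    intro T hs
    have := one_le_sizeOf T
    omega
  | succ n ihC =>
    rintro ⟨f, cs⟩ hs ha
    rw [AllCont] at ha
    obtain ⟨L, hGL, heL⟩ := mixedProd k h hk hh hk0 cs [] f ha.1 (by simp)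
      (fun c hc => ihC c.2 (by have := sizeOf_child_lt (f := f) hc; omega) (ha.2 c hc))
    refine ⟨L, hGL, fun x => ?_⟩
    rw [val_node, ← heL x, List.nil_append]

end OLR

/-- Constructive form of the operator-linearity theorem: every decorated
rooted forest (with continuous decorations and separable Volterra kernels
`K_ω(x,t) = k_ω(x)h_ω(t)` having nonvanishing `x`-factors) is equivalent to a
forest with no branching points; i.e. every separable Volterra integral
polynomial equals, as a function, a sum of iterated integrals. -/
theorem operator_linear_reduction {Ω : Type} (k h : Ω → ℝ → ℝ)
    (hk : ∀ ω, Continuous (k ω)) (hh : ∀ ω, Continuous (h ω))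
    (hk0 : ∀ ω x, k ω x ≠ 0)
    (F : List (DTree Ω)) (hF : ∀ T ∈ F, T.AllCont) :
    ∃ F' : List (DTree Ω),
      (∀ T ∈ F', T.NoBranch) ∧ (∀ T ∈ F', T.AllCont) ∧
      (fun x => (F.map fun T => T.val k h x).sum) =
        (fun x => (F'.map fun T => T.val k h x).sum) := by
  obtain ⟨F', hG, he⟩ := OLR.sum_choice k h (fun T x => DTree.val k h T x) F
    (fun T hT => OLR.treeReduce k h hk hh hk0 (sizeOf T) T le_rfl (hF T hT))
  refine ⟨F', fun T hT => (hG T hT).1, fun T hT => (hG T hT).2, funext fun x => ?_⟩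
  exact he x
end

section
/- (Matching Rota-Baxter property of kernel-in-t operators.) For each ω in an index set Ω, let h_ω be continuous and define I_ω(f)(x) = ∫₀ˣ h_ω(t)f(t) dt. Then the family {I_ω} is a matching Rota-Baxter family: for all continuous f, g and all α, β ∈ Ω, I_α(f)·I_β(g) = I_α(f·I_β(g)) + I_β(I_α(f)·g). -/
open intervalIntegral MeasureTheory Set

/-- The family of operators `I_ω(f)(x) = ∫₀ˣ h_ω(t)f(t) dt`, for kernels
depending only on the integration variable, is a matching Rota-Baxter family:
`I_α(f)·I_β(g) = I_α(f·I_β(g)) + I_β(I_α(f)·g)`. -/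
theorem matching_rota_baxter_family
    {Ω : Type*} (h : Ω → ℝ → ℝ) (hh : ∀ ω, Continuous (h ω))
    (f g : ℝ → ℝ) (hf : Continuous f) (hg : Continuous g)
    (α β : Ω) (x : ℝ) :
    (∫ t in (0:ℝ)..x, h α t * f t) * (∫ t in (0:ℝ)..x, h β t * g t) =
      (∫ t in (0:ℝ)..x, h α t * (f t * ∫ u in (0:ℝ)..t, h β u * g u)) +
      (∫ t in (0:ℝ)..x, h β t * ((∫ u in (0:ℝ)..t, h α u * f u) * g t)) := by
  set F : ℝ → ℝ := fun u => ∫ t in (0:ℝ)..u, h α t * f t with hF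
  set G : ℝ → ℝ := fun u => ∫ t in (0:ℝ)..u, h β t * g t with hG
  have hαf : Continuous fun t => h α t * f t := (hh α).mul hf
  have hβg : Continuous fun t => h β t * g t := (hh β).mul hg
  have hFd : ∀ u : ℝ, HasDerivAt F (h α u * f u) u := fun u =>
    (hαf.integral_hasStrictDerivAt 0 u).hasDerivAt
  have hGd : ∀ u : ℝ, HasDerivAt G (h β u * g u) u := fun u =>
    (hβg.integral_hasStrictDerivAt 0 u).hasDerivAt
  have hFc : Continuous F := continuous_iff_continuousAt.2 fun u => (hFd u).continuousAt
  have hGc : Continuous G := continuous_iff_continuousAt.2 fun u => (hGd u).continuousAt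
  have key := integral_deriv_mul_eq_sub_of_hasDerivAt (a := 0) (b := x)
    (u := F) (v := G) (u' := fun t => h α t * f t) (v' := fun t => h β t * g t)
    hFc.continuousOn hGc.continuousOn (fun t _ => hFd t) (fun t _ => hGd t)
    (hαf.intervalIntegrable 0 x) (hβg.intervalIntegrable 0 x)
  have hF0 : F 0 = 0 := integral_same
  have hG0 : G 0 = 0 := integral_same
  rw [hF0, hG0, mul_zero, sub_zero] at key
  have split : (∫ t in (0:ℝ)..x, h α t * f t * G t + F t * (h β t * g t)) =
      (∫ t in (0:ℝ)..x, h α t * (f t * G t)) + ∫ t in (0:ℝ)..x, h β t * (F t * g t) := by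
    rw [intervalIntegral.integral_congr
      (g := fun t => h α t * (f t * G t) + h β t * (F t * g t)) (fun t _ => by ring)]
    exact intervalIntegral.integral_add
      (((hh α).mul (hf.mul hGc)).intervalIntegrable 0 x)
      (((hh β).mul (hFc.mul hg)).intervalIntegrable 0 x)
  rw [split] at key
  exact key.symm
end

section
/- (Base case of the iterated reduction, with the product placed under an outer factor.) With separable Volterra operators and twists as above, for continuous a, f, g: a·P_α(f)·P_β(g) = τ_β·a·P_α(τ_β⁻¹·f·P_β(g)) + τ_α·a·P_β(τ_α⁻¹·g·P_α(f)) as functions on ℝ. -/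
/-- Base case of the iterated reduction, with the product placed under an
outer continuous multiplier `a`:
`a·P_α(f)·P_β(g) = τ_β·a·P_α(τ_β⁻¹·f·P_β(g)) + τ_α·a·P_β(τ_α⁻¹·g·P_α(f))`. -/
theorem reduction_base_case_with_multiplier
    (kα hα kβ hβ : ℝ → ℝ)
    (hkα : Continuous kα) (hhα : Continuous hα)
    (hkβ : Continuous kβ) (hhβ : Continuous hβ)
    (hkα0 : ∀ x, kα x ≠ 0) (hkβ0 : ∀ x, kβ x ≠ 0)
    (a f g : ℝ → ℝ) (ha : Continuous a) (hf : Continuous f) (hg : Continuous g) :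
    let τα : ℝ → ℝ := fun x => kα x / kα 0
    let τβ : ℝ → ℝ := fun x => kβ x / kβ 0
    ∀ x : ℝ,
      a x * volterraP kα hα f x * volterraP kβ hβ g x =
        τβ x * a x *
          volterraP kα hα (fun t => (τβ t)⁻¹ * f t * volterraP kβ hβ g t) x +
        τα x * a x *
          volterraP kβ hβ (fun t => (τα t)⁻¹ * g t * volterraP kα hα f t) x := by
  intro τα τβ x
  set F : ℝ → ℝ := fun y => ∫ t in (0:ℝ)..y, hα t * f t with hFdef
  set G : ℝ → ℝ := fun y => ∫ t in (0:ℝ)..y, hβ t * g t with hGdef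
  have hFc : Continuous fun t => hα t * f t := hhα.mul hf
  have hGc : Continuous fun t => hβ t * g t := hhβ.mul hg
  have hFder : ∀ y : ℝ, HasDerivAt F (hα y * f y) y := fun y =>
    intervalIntegral.integral_hasDerivAt_right (hFc.intervalIntegrable _ _)
      (hFc.stronglyMeasurable.stronglyMeasurableAtFilter) hFc.continuousAt
  have hGder : ∀ y : ℝ, HasDerivAt G (hβ y * g y) y := fun y =>
    intervalIntegral.integral_hasDerivAt_right (hGc.intervalIntegrable _ _)
      (hGc.stronglyMeasurable.stronglyMeasurableAtFilter) hGc.continuousAt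
  have hFcont : Continuous F := by
    apply continuous_iff_continuousAt.2
    exact fun y => (hFder y).continuousAt
  have hGcont : Continuous G := by
    apply continuous_iff_continuousAt.2
    exact fun y => (hGder y).continuousAt
  have hPα : ∀ y, volterraP kα hα f y = kα y * F y := by
    intro y
    unfold volterraP
    rw [hFdef, ← intervalIntegral.integral_const_mul]
    simp [mul_assoc]
  have hPβ : ∀ y, volterraP kβ hβ g y = kβ y * G y := by
    intro y
    unfold volterraP
    rw [hGdef, ← intervalIntegral.integral_const_mul]
    simp [mul_assoc]
  have ibp : (∫ t in (0:ℝ)..x, F t * (hβ t * g t)) =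
      F x * G x - ∫ t in (0:ℝ)..x, (hα t * f t) * G t := by
    have := intervalIntegral.integral_mul_deriv_eq_deriv_mul
      (u := F) (v := G) (u' := fun t => hα t * f t) (v' := fun t => hβ t * g t)
      (a := (0:ℝ)) (b := x)
      (fun t _ => hFder t) (fun t _ => hGder t)
      (hFc.intervalIntegrable _ _) (hGc.intervalIntegrable _ _)
    simpa [hFdef] using this
  have hI1 : volterraP kα hα (fun t => (τβ t)⁻¹ * f t * volterraP kβ hβ g t) x =
      kα x * kβ 0 * ∫ t in (0:ℝ)..x, (hα t * f t) * G t := by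
    have inner : ∀ t, (∫ s in (0:ℝ)..t, kβ t * hβ s * g s) = kβ t * G t := by
      intro t; have := hPβ t; unfold volterraP at this; exact this
    unfold volterraP
    rw [intervalIntegral.integral_congr
      (g := fun t => kα x * kβ 0 * (hα t * f t * G t))
      (fun t _ => by
        beta_reduce
        rw [inner t]
        simp only [τβ]
        field_simp [hkβ0 t])]
    rw [intervalIntegral.integral_const_mul]
  have hI2 : volterraP kβ hβ (fun t => (τα t)⁻¹ * g t * volterraP kα hα f t) x =
      kβ x * kα 0 * ∫ t in (0:ℝ)..x, F t * (hβ t * g t) := by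
    have inner : ∀ t, (∫ s in (0:ℝ)..t, kα t * hα s * f s) = kα t * F t := by
      intro t; have := hPα t; unfold volterraP at this; exact this
    unfold volterraP
    rw [intervalIntegral.integral_congr
      (g := fun t => kβ x * kα 0 * (F t * (hβ t * g t)))
      (fun t _ => by
        beta_reduce
        rw [inner t]
        simp only [τα]
        field_simp [hkα0 t])]
    rw [intervalIntegral.integral_const_mul]
  rw [hPα, hPβ, hI1, hI2, ibp]
  simp only [τα, τβ]
  field_simp [hkα0 0, hkβ0 0]
  ring
end
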